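/- arXiv:1807.00384 — 2 statements merged into one kernel-verified Lean document; each statement's English description precedes it below -/
import Mathlib

section
/- Let V be a normal subgroup of a finite group G and H a pronormal subgroup of G. Then for every H-invariant subgroup U of V, one has U = N_U(H)·[H, U]. -/
/-!
Given `u ∈ U`, pronormality yields `k ∈ ⟨H, H^u⟩` with `H^k = H^u`, so `k⁻¹ u` normalizes `H`.
Since `u h u⁻¹ = [u, h] h`, the group `⟨H, H^u⟩` lies in `H [H, U]`, which is a product set because
`H` normalizes `[H, U]`. Writing `k = h c` gives `u = (h c h⁻¹) · (h k⁻¹ u)` with `h c h⁻¹ ∈ [H, U]`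
and `h k⁻¹ u ∈ N_U(H)`. Finally `U` normalizes `[H, U]`, so `N_U(H) [H, U]` is a subgroup.
-/

open Pointwise

/-- `H` is pronormal in `G`: for every `g`, `H` and `H^g` are conjugate in `⟨H, H^g⟩`. -/
def Pronormal {G : Type*} [Group G] (H : Subgroup G) : Prop :=
  ∀ g : G, ∃ k ∈ (H ⊔ MulAut.conj g • H : Subgroup G),
    MulAut.conj k • H = MulAut.conj g • H

namespace Subgroup

variable {G : Type*} [Group G]

theorem conj_smul_eq_self_iff_mem_normalizer {H : Subgroup G} {g : G} :
    MulAut.conj g • H = H ↔ g ∈ normalizer (H : Set G) :=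
  mem_normalizer_iff_map_conj_eq.symm

theorem le_normalizer_iff_forall_conj_smul_eq {H K : Subgroup G} :
    H ≤ normalizer (K : Set G) ↔ ∀ h ∈ H, MulAut.conj h • K = K := by
  simp only [conj_smul_eq_self_iff_mem_normalizer, SetLike.le_def]

theorem conj_smul_le_sup_commutator (H : Subgroup G) {U : Subgroup G} {u : G} (hu : u ∈ U) :
    MulAut.conj u • H ≤ H ⊔ ⁅H, U⁆ := by
  rintro _ ⟨y, hy, rfl⟩
  have hcomm : u * y * u⁻¹ * y⁻¹ ∈ ⁅H, U⁆ := by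
    rw [commutator_comm]
    exact commutator_mem_commutator hu hy
  simpa using mul_mem (mem_sup_right hcomm) (mem_sup_left hy)

end Subgroup

open Subgroup

section Pronormal

variable {G : Type*} [Group G] {H : Subgroup G}

theorem Pronormal.exists_mem_sup_inv_mul_mem_normalizer (hH : Pronormal H) (g : G) :
    ∃ k ∈ H ⊔ MulAut.conj g • H, k⁻¹ * g ∈ normalizer (H : Set G) := by
  obtain ⟨k, hk, hconj⟩ := hH g
  refine ⟨k, hk, conj_smul_eq_self_iff_mem_normalizer.mp ?_⟩
  rw [map_mul, mul_smul, ← hconj, ← mul_smul, ← map_mul, inv_mul_cancel, map_one, one_smul]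

theorem Pronormal.inf_normalizer_sup_commutator_eq {U : Subgroup G} (hH : Pronormal H)
    (hU : H ≤ normalizer (U : Set G)) : U ⊓ normalizer (H : Set G) ⊔ ⁅H, U⁆ = U := by
  have hKU : ⁅H, U⁆ ≤ U := le_normalizer_iff_commutator_le_right.mp hU
  refine le_antisymm (sup_le inf_le_left hKU) fun u hu ↦ ?_
  obtain ⟨k, hk, hn⟩ := hH.exists_mem_sup_inv_mul_mem_normalizer u
  have hk' : k ∈ (H : Set G) * ⁅H, U⁆ := by
    rw [← coe_mul_of_left_le_normalizer_right _ _ (normalizer_commutator_ge_left H U)]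
    exact sup_le le_sup_left (conj_smul_le_sup_commutator H hu) hk
  obtain ⟨h, hh, c, hc, rfl⟩ := hk'
  have hc' : h * c * h⁻¹ ∈ ⁅H, U⁆ :=
    le_normalizer_iff.mp (normalizer_commutator_ge_left H U) h hh c hc
  have hm : (h * c * h⁻¹)⁻¹ * u ∈ U ⊓ normalizer (H : Set G) := by
    refine mem_inf.mpr ⟨mul_mem (inv_mem (hKU hc')) hu, ?_⟩
    simpa [mul_assoc] using mul_mem (le_normalizer hh) hn
  simpa only [mul_inv_cancel_left] using mul_mem (mem_sup_right hc') (mem_sup_left hm)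

end Pronormal

theorem eq_normalizer_mul_commutator_of_pronormal_general
    {G : Type*} [Group G]
    (H : Subgroup G) (hH : Pronormal H)
    (U : Subgroup G) (hUinv : ∀ h ∈ H, MulAut.conj h • U = U) :
    (U : Set G) = ((U ⊓ Subgroup.normalizer (H : Set G) : Subgroup G) : Set G) * ((⁅H, U⁆ : Subgroup G) : Set G) := by
  have hU : H ≤ normalizer (U : Set G) := le_normalizer_iff_forall_conj_smul_eq.mpr hUinv
  rw [← coe_mul_of_left_le_normalizer_right _ _
      (inf_le_left.trans (normalizer_commutator_ge_right H U)),
    hH.inf_normalizer_sup_commutator_eq hU]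

theorem eq_normalizer_mul_commutator_of_pronormal
    {G : Type*} [Group G] [Finite G] (V : Subgroup G) [V.Normal]
    (H : Subgroup G) (hH : Pronormal H)
    (U : Subgroup G) (hUV : U ≤ V) (hUinv : ∀ h ∈ H, MulAut.conj h • U = U) :
    (U : Set G) = ((U ⊓ Subgroup.normalizer (H : Set G) : Subgroup G) : Set G) * ((⁅H, U⁆ : Subgroup G) : Set G) :=
  eq_normalizer_mul_commutator_of_pronormal_general H hH U hUinv
end

section
/- Every subgroup of a finite solvable group that is a Hall π-subgroup is pronormal in the group. -/
/-!
Hall `π`-subgroups `H`, `K` of a finite solvable group `G` are conjugate, by induction on `|G|`.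
A Sylow subgroup of the last nontrivial term of the derived series is a nontrivial abelian
normal `p`-subgroup `N`. If `p ∈ π`, then `N` lies in every Hall `π`-subgroup, so conjugacy in
`G ⧸ N` lifts to `G`. If `p ∉ π`, conjugacy in `G ⧸ N` makes `HN = KN` after conjugating `H`; if
this subgroup is proper we induct inside it, and otherwise `H` and `K` are complements of the
abelian normal Hall subgroup `N`, hence conjugate by the abelian case of Schur–Zassenhaus.
Pronormality follows because `H` and `H^g` are Hall `π`-subgroups of `⟨H, H^g⟩`.
-/

open Pointwise

namespace Nat

def IsPiNumber (π : Set ℕ) (n : ℕ) : Prop :=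
  ∀ p : ℕ, p.Prime → p ∣ n → p ∈ π

namespace IsPiNumber

variable {π : Set ℕ} {m n : ℕ}

theorem of_dvd (hn : IsPiNumber π n) (hmn : m ∣ n) : IsPiNumber π m :=
  fun p hp hpm => hn p hp (hpm.trans hmn)

theorem mul (hm : IsPiNumber π m) (hn : IsPiNumber π n) : IsPiNumber π (m * n) :=
  fun p hp hpmn => (hp.dvd_mul.mp hpmn).elim (hm p hp) (hn p hp)

theorem coprime (hm : IsPiNumber π m) (hn : IsPiNumber πᶜ n) : m.Coprime n :=
  Nat.coprime_of_dvd fun p hp hpm hpn => hn p hp hpn (hm p hp hpm)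

theorem eq_one (hn : IsPiNumber π n) (hn' : IsPiNumber πᶜ n) : n = 1 :=
  (Nat.coprime_self n).mp (hn.coprime hn')

end IsPiNumber

end Nat

open Nat (IsPiNumber)

theorem IsPGroup.isPiNumber_card_or_compl {p : ℕ} [hp : Fact p.Prime] {P : Type*} [Group P]
    [Finite P] (hP : IsPGroup p P) (π : Set ℕ) :
    IsPiNumber π (Nat.card P) ∨ IsPiNumber πᶜ (Nat.card P) := by
  obtain ⟨k, hk⟩ := IsPGroup.iff_card.mp hP
  have eq_p : ∀ q : ℕ, q.Prime → q ∣ Nat.card P → q = p := fun q hq hqP =>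
    (Nat.prime_dvd_prime_iff_eq hq hp.out).mp (hq.dvd_of_dvd_pow (hk ▸ hqP))
  by_cases hpπ : p ∈ π
  · exact .inl fun q hq hqP => eq_p q hq hqP ▸ hpπ
  · exact .inr fun q hq hqP => eq_p q hq hqP ▸ hpπ

namespace Subgroup

variable {G G' : Type*} [Group G] [Group G'] {π : Set ℕ} {H K M N : Subgroup G}

theorem card_quotient_lt [Finite G] (hN : N ≠ ⊥) : Nat.card (G ⧸ N) < Nat.card G := by
  rw [card_eq_card_quotient_mul_card_subgroup N]
  exact lt_mul_of_one_lt_right Nat.card_pos ((one_lt_card_iff_ne_bot N).mpr hN)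

theorem card_lt_of_ne_top [Finite G] (hM : M ≠ ⊤) : Nat.card M < Nat.card G :=
  (card_le_card_group M).lt_of_ne fun h => hM (eq_top_of_card_eq M h)

theorem map_conj_smul (f : G →* G') (g : G) (H : Subgroup G) :
    (MulAut.conj g • H).map f = MulAut.conj (f g) • H.map f := by
  change (H.map (MulAut.conj g).toMonoidHom).map f =
    (H.map f).map (MulAut.conj (f g)).toMonoidHom
  rw [map_map, map_map]
  congr 1
  ext x
  simp

theorem exists_conj_smul_sup_ker_eq {f : G →* G'} (hf : Function.Surjective f) {g' : G'}
    (h : MulAut.conj g' • H.map f = K.map f) : ∃ g : G, MulAut.conj g • H ⊔ f.ker = K ⊔ f.ker := by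
  obtain ⟨g, rfl⟩ := hf g'
  refine ⟨g, ?_⟩
  rw [← comap_map_eq, ← comap_map_eq, map_conj_smul, h]

theorem conj_smul_eq_of_subgroupOf_eq (hH : H ≤ M) (hK : K ≤ M) {m : M}
    (h : MulAut.conj m • H.subgroupOf M = K.subgroupOf M) : MulAut.conj (m : G) • H = K := by
  rw [conj_smul_subgroupOf hH m] at h
  have h' := congrArg (map M.subtype) h
  rwa [subgroupOf_map_subtype, subgroupOf_map_subtype, inf_eq_left.mpr (conj_smul_le_of_le hH m),
    inf_eq_left.mpr hK] at h'

-- `N.QuotientDiff` is the set of transversals of `N` up to the `diff` relation; its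
-- points have complements of `N` as stabilizers (the abelian case of Schur–Zassenhaus).
open MulAction in
theorem stabilizer_quotientDiff_mk_eq [Finite G] [N.Normal] [IsMulCommutative N]
    (hN : (Nat.card N).Coprime N.index) (hK : N.IsComplement' K) :
    stabilizer (α := N.QuotientDiff) G (Quotient.mk'' ⟨K, hK.symm⟩) = K := by
  have hle : K ≤ stabilizer (α := N.QuotientDiff) G (Quotient.mk'' ⟨K, hK.symm⟩) := by
    intro k hk
    change (Quotient.mk'' ((MulOpposite.op k⁻¹) • (⟨K, hK.symm⟩ : N.LeftTransversal)) :
      N.QuotientDiff) = Quotient.mk'' ⟨K, hK.symm⟩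
    congr 1
    apply Subtype.ext
    change MulOpposite.op k⁻¹ • (K : Set G) = K
    exact op_smul_coe_set (K.inv_mem hk)
  have hcompl : N.IsComplement'
      (stabilizer (α := N.QuotientDiff) G (Quotient.mk'' ⟨K, hK.symm⟩)) :=
    isComplement'_stabilizer_of_coprime hN
  refine (eq_of_le_of_card_ge hle (Nat.le_of_eq ?_)).symm
  exact Nat.eq_of_mul_eq_mul_left Nat.card_pos
    (hcompl.card_mul_card.trans hK.card_mul_card.symm)

open MulAction in
theorem exists_conj_smul_eq_of_isComplement' [Finite G] [N.Normal] [IsMulCommutative N]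
    (hN : (Nat.card N).Coprime N.index) (hH : N.IsComplement' H) (hK : N.IsComplement' K) :
    ∃ g : G, MulAut.conj g • H = K := by
  obtain ⟨n, hn⟩ := exists_smul_eq hN (Quotient.mk'' ⟨H, hH.symm⟩) (Quotient.mk'' ⟨K, hK.symm⟩)
  refine ⟨n, ?_⟩
  rw [← stabilizer_quotientDiff_mk_eq hN hH, ← stabilizer_quotientDiff_mk_eq hN hK, ← hn]
  exact (stabilizer_smul_eq_stabilizer_map_conj (n : G) _).symm

def IsHall (H : Subgroup G) (π : Set ℕ) : Prop :=
  IsPiNumber π (Nat.card H) ∧ IsPiNumber πᶜ H.index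

namespace IsHall

theorem map (hH : H.IsHall π) {f : G →* G'} (hf : Function.Surjective f) : (H.map f).IsHall π :=
  ⟨hH.1.of_dvd (card_map_dvd H f), hH.2.of_dvd (index_map_dvd H hf)⟩

theorem conj (hH : H.IsHall π) (g : G) : (MulAut.conj g • H).IsHall π :=
  hH.map (MulAut.conj g).surjective

theorem subgroupOf (hH : H.IsHall π) (hHK : H ≤ K) : (H.subgroupOf K).IsHall π :=
  ⟨hH.1.of_dvd (Nat.card_congr (subgroupOfEquivOfLe hHK).toEquiv).dvd,
    hH.2.of_dvd (relIndex_dvd_index_of_le hHK)⟩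

theorem le_of_normal (hH : H.IsHall π) [N.Normal] (hN : IsPiNumber π (Nat.card N)) : N ≤ H := by
  have hHN : IsPiNumber π (Nat.card (H ⊔ N : Subgroup G)) := by
    rw [← card_mul_index (N.subgroupOf (H ⊔ N)), ← relIndex, relIndex_sup_right]
    exact (hN.of_dvd (card_comap_dvd_of_injective N _ (H ⊔ N).subtype_injective)).mul
      (hH.1.of_dvd (relIndex_dvd_card N H))
  have hrel : H.relIndex (H ⊔ N) = 1 :=
    (hHN.of_dvd (relIndex_dvd_card H _)).eq_one
      (hH.2.of_dvd (relIndex_dvd_index_of_le le_sup_left))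
  exact le_sup_right.trans (relIndex_eq_one.mp hrel)

theorem isComplement' (hH : H.IsHall π) [N.Normal] (hN : IsPiNumber πᶜ (Nat.card N))
    (hHN : H ⊔ N = ⊤) : N.IsComplement' H := by
  refine isComplement'_of_disjoint_and_mul_eq_univ
    (disjoint_of_coprime_natCard (hH.1.coprime hN).symm) ?_
  rw [← normal_mul, sup_comm, hHN, coe_top]

end IsHall

end Subgroup

theorem Group.IsSolvable.exists_normal_isMulCommutative_ne_bot {G : Type*} [Group G]
    [IsSolvable G] [Nontrivial G] :
    ∃ N : Subgroup G, N.Normal ∧ IsMulCommutative N ∧ N ≠ ⊥ := by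
  classical
  have hex : ∃ n, derivedSeries G n = ⊥ := IsSolvable.solvable
  have hpos : Nat.find hex ≠ 0 := fun h0 =>
    (top_ne_bot (α := Subgroup G)) (by simpa [h0] using Nat.find_spec hex)
  obtain ⟨n, hn⟩ := Nat.exists_eq_add_one_of_ne_zero hpos
  refine ⟨derivedSeries G n, derivedSeries_normal G n, ?_, Nat.find_min hex (by omega)⟩
  rw [← Subgroup.le_centralizer_iff_isMulCommutative,
    ← Subgroup.commutator_eq_bot_iff_le_centralizer, ← derivedSeries_succ, ← hn]
  exact Nat.find_spec hex

theorem Group.IsSolvable.exists_normal_isPGroup_isMulCommutative_ne_bot {G : Type*} [Group G]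
    [Finite G] [IsSolvable G] [Nontrivial G] :
    ∃ p : ℕ, p.Prime ∧ ∃ N : Subgroup G,
      N.Normal ∧ IsMulCommutative N ∧ IsPGroup p N ∧ N ≠ ⊥ := by
  obtain ⟨A, hA, hAcomm, hAbot⟩ := exists_normal_isMulCommutative_ne_bot (G := G)
  obtain ⟨p, hp, hpA⟩ :=
    Nat.exists_prime_and_dvd ((Subgroup.one_lt_card_iff_ne_bot A).mpr hAbot).ne'
  have := Fact.mk hp
  let P : Sylow p A := default
  have : (P : Subgroup A).Characteristic := P.characteristic_of_normal inferInstance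
  refine ⟨p, hp, (P : Subgroup A).map A.subtype, inferInstance, inferInstance,
    P.isPGroup'.map _, ?_⟩
  rw [Ne, Subgroup.map_eq_bot_iff_of_injective _ A.subtype_injective]
  exact P.ne_bot_of_dvd_card hpA

namespace Subgroup.IsHall

variable {G : Type*} [Group G] {π : Set ℕ}

theorem exists_conj_smul_eq [Finite G] [Group.IsSolvable G] {H K : Subgroup G} (hH : H.IsHall π)
    (hK : K.IsHall π) : ∃ g : G, MulAut.conj g • H = K := by
  induction hG : Nat.card G using Nat.strong_induction_on generalizing G with
  | _ n ih =>
  subst hG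
  rcases subsingleton_or_nontrivial G with hG | hG
  · exact ⟨1, Subsingleton.elim _ _⟩
  obtain ⟨p, hp, N, hN, hNcomm, hNp, hNbot⟩ :=
    Group.IsSolvable.exists_normal_isPGroup_isMulCommutative_ne_bot (G := G)
  have := Fact.mk hp
  have hmk := QuotientGroup.mk'_surjective N
  obtain ⟨g', hg'⟩ := ih _ (card_quotient_lt hNbot) (hH.map hmk) (hK.map hmk) rfl
  obtain ⟨g, hg⟩ := exists_conj_smul_sup_ker_eq hmk hg'
  rw [QuotientGroup.ker_mk'] at hg
  rcases hNp.isPiNumber_card_or_compl π with hNπ | hNπ'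
  · rw [sup_eq_left.mpr ((hH.conj g).le_of_normal hNπ), sup_eq_left.mpr (hK.le_of_normal hNπ)]
      at hg
    exact ⟨g, hg⟩
  suffices ∃ x : G, MulAut.conj x • MulAut.conj g • H = K from
    let ⟨x, hx⟩ := this; ⟨x * g, by rwa [map_mul, mul_smul]⟩
  by_cases hM : K ⊔ N = ⊤
  · have hHc := (hH.conj g).isComplement' hNπ' (hg.trans hM)
    have hKc := hK.isComplement' hNπ' hM
    refine exists_conj_smul_eq_of_isComplement' ?_ hHc hKc
    rw [hKc.symm.index_eq_card]
    exact (hK.1.coprime hNπ').symm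
  · have hHM : MulAut.conj g • H ≤ K ⊔ N := hg ▸ le_sup_left
    obtain ⟨m, hm⟩ := ih _ (card_lt_of_ne_top hM) ((hH.conj g).subgroupOf hHM)
      (hK.subgroupOf le_sup_left) rfl
    exact ⟨m, conj_smul_eq_of_subgroupOf_eq hHM le_sup_left hm⟩

end Subgroup.IsHall

theorem pronormal_of_hall_of_solvable
    {G : Type*} [Group G] [Finite G] [Group.IsSolvable G] (H : Subgroup G) (π : Set ℕ)
    (h1 : ∀ p : ℕ, p.Prime → p ∣ Nat.card H → p ∈ π)
    (h2 : ∀ p : ℕ, p.Prime → p ∣ H.index → p ∉ π) :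
    Pronormal H := by
  intro g
  have hH : H.IsHall π := ⟨h1, h2⟩
  have hHL : H ≤ H ⊔ MulAut.conj g • H := le_sup_left
  have hgHL : MulAut.conj g • H ≤ H ⊔ MulAut.conj g • H := le_sup_right
  obtain ⟨k, hk⟩ := (hH.subgroupOf hHL).exists_conj_smul_eq ((hH.conj g).subgroupOf hgHL)
  exact ⟨k, k.2, Subgroup.conj_smul_eq_of_subgroupOf_eq hHL hgHL hk⟩
end
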